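/- arXiv:2209.00725 — 6 statements merged into one kernel-verified Lean document; each statement's English description precedes it below -/
import Mathlib

section
/- Let x₁,…,x_N and y₁,…,y_N be real numbers and a ∈ ℝ. Suppose there exist indices i, j with x_i + y_j ≥ a, and define î = argmin{x_i : ∃ j, x_i + y_j ≥ a} and ĵ = argmin{y_j : x_î + y_j ≥ a}. Then there exists a permutation σ of {1,…,N} maximizing #{i : x_i + y_{σ(i)} ≥ a} such that σ(î) = ĵ. -/
/-!
Take an optimal permutation `τ` and compose it with the transposition of `τ î` and `ĵ`: the new
permutation sends `î ↦ ĵ` and `τ⁻¹ ĵ ↦ τ î` and agrees with `τ` elsewhere. The pair `(î, ĵ)` is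
good, and if both old pairs `(î, τ î)` and `(τ⁻¹ ĵ, ĵ)` were good, then `τ⁻¹ ĵ` is matchable, so
minimality of `x î` gives `x (τ⁻¹ ĵ) + y (τ î) ≥ x î + y (τ î) ≥ a`. So the score does not drop.
-/

open Finset

section

variable {ι : Type*} [Fintype ι]

def matchingScore (P : ι → ι → Prop) [DecidableRel P] (σ : Equiv.Perm ι) : ℕ :=
  #{i | P i (σ i)}

variable (P : ι → ι → Prop) [DecidableRel P]

theorem matchingScore_eq_sum (σ : Equiv.Perm ι) :
    matchingScore P σ = ∑ i, if P i (σ i) then 1 else 0 :=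
  card_filter _ _

theorem matchingScore_le_of_eqOn_compl [DecidableEq ι] {σ τ : Equiv.Perm ι} (s : Finset ι)
    (hst : ∀ i ∉ s, σ i = τ i)
    (hs : ∑ i ∈ s, (if P i (τ i) then 1 else 0) ≤ ∑ i ∈ s, if P i (σ i) then 1 else 0) :
    matchingScore P τ ≤ matchingScore P σ := by
  rw [matchingScore_eq_sum, matchingScore_eq_sum, ← sum_add_sum_compl s,
    ← sum_add_sum_compl s fun i => if P i (σ i) then 1 else 0]
  refine add_le_add hs (sum_le_sum fun i hi => ?_)
  rw [hst i (mem_compl.mp hi)]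

theorem matchingScore_le_trans_swap [DecidableEq ι] (τ : Equiv.Perm ι) {i j : ι} (hij : P i j)
    (hexch : P i (τ i) → P (τ.symm j) j → P (τ.symm j) (τ i)) :
    matchingScore P τ ≤ matchingScore P (τ.trans (Equiv.swap (τ i) j)) := by
  set i' := τ.symm j
  have hτi' : τ i' = j := τ.apply_symm_apply j
  by_cases hii' : i = i'
  · rw [hii', hτi', Equiv.swap_self, Equiv.trans_refl]
  refine matchingScore_le_of_eqOn_compl P {i, i'} (fun k hk => ?_) ?_
  · simp only [mem_insert, mem_singleton, not_or] at hk
    exact Equiv.swap_apply_of_ne_of_ne (τ.injective.ne hk.1) (hτi' ▸ τ.injective.ne hk.2)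
  · have hσi' : Equiv.swap (τ i) j (τ i') = τ i := by rw [hτi', Equiv.swap_apply_right]
    simp only [sum_pair hii', Equiv.trans_apply, Equiv.swap_apply_left, hσi', if_pos hij]
    split_ifs <;> simp_all

theorem exists_forall_matchingScore_le_apply_eq [DecidableEq ι] {i j : ι} (hij : P i j)
    (hexch : ∀ k l, P i l → P k j → P k l) :
    ∃ σ : Equiv.Perm ι, (∀ τ, matchingScore P τ ≤ matchingScore P σ) ∧ σ i = j := by
  obtain ⟨τ, hτ⟩ := Finite.exists_max (matchingScore P)
  refine ⟨τ.trans (Equiv.swap (τ i) j), fun ρ => (hτ ρ).trans ?_, by simp⟩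
  exact matchingScore_le_trans_swap P τ hij (hexch _ _)

end

theorem stmt5_general {N : ℕ} (x y : Fin N → ℝ) (a : ℝ) (ih jh : Fin N)
    (h2 : ∀ i, (∃ j, a ≤ x i + y j) → x ih ≤ x i)
    (h3 : a ≤ x ih + y jh) :
    ∃ σ : Equiv.Perm (Fin N),
      (∀ τ : Equiv.Perm (Fin N),
        (Finset.univ.filter (fun i => a ≤ x i + y (τ i))).card ≤
          (Finset.univ.filter (fun i => a ≤ x i + y (σ i))).card) ∧
      σ ih = jh :=
  exists_forall_matchingScore_le_apply_eq (fun i j => a ≤ x i + y j) h3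
    fun k l hl hk => by linarith [h2 k ⟨jh, hk⟩]

/-- If some pair sums to at least `a`, and `î`, `ĵ` are the greedy minimizers
(`î` minimizes `x` among matchable indices, `ĵ` minimizes `y` among partners of `î`),
then there exists an optimal matching `σ` with `σ î = ĵ`. -/
theorem stmt5 {N : ℕ} (x y : Fin N → ℝ) (a : ℝ) (ih jh : Fin N)
    (h1 : ∃ j, a ≤ x ih + y j)
    (h2 : ∀ i, (∃ j, a ≤ x i + y j) → x ih ≤ x i)
    (h3 : a ≤ x ih + y jh)
    (h4 : ∀ j, a ≤ x ih + y j → y jh ≤ y j) :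
    ∃ σ : Equiv.Perm (Fin N),
      (∀ τ : Equiv.Perm (Fin N),
        (Finset.univ.filter (fun i => a ≤ x i + y (τ i))).card ≤
          (Finset.univ.filter (fun i => a ≤ x i + y (σ i))).card) ∧
      σ ih = jh :=
  stmt5_general x y a ih jh h2 h3
end

section
/- Let x₁,…,x_N, y₁,…,y_N ∈ ℝ and a ∈ ℝ, and let σ be any permutation of {1,…,N}. Suppose i ≠ i′ with x_i ≤ x_{i′}, y_{σ(i′)} ≤ y_{σ(i)}, and x_i + y_{σ(i′)} ≥ a. Then the permutation σ′ obtained from σ by swapping the images of i and i′ (σ′(i) = σ(i′), σ′(i′) = σ(i), σ′ = σ elsewhere) satisfies #{k : x_k + y_{σ′(k)} ≥ a} ≥ #{k : x_k + y_{σ(k)} ≥ a}. -/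
open scoped Classical

/-- Swapping the images of `i` and `i'` (with `x i ≤ x i'`, `y (σ i') ≤ y (σ i)` and
`x i + y (σ i') ≥ a`) does not decrease the number of pairs summing to at least `a`. -/
theorem stmt6 {N : ℕ} (x y : Fin N → ℝ) (a : ℝ) (σ : Equiv.Perm (Fin N))
    (i i' : Fin N) (hne : i ≠ i') (h1 : x i ≤ x i') (h2 : y (σ i') ≤ y (σ i))
    (h3 : a ≤ x i + y (σ i')) :
    (Finset.univ.filter (fun k => a ≤ x k + y (σ k))).card ≤
      (Finset.univ.filter (fun k => a ≤ x k + y ((σ * Equiv.swap i i') k))).card := by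
  apply Finset.card_le_card
  intro k hk
  simp only [Finset.mem_filter, Finset.mem_univ, true_and] at hk ⊢
  by_cases hki : k = i
  · subst hki
    simpa [Equiv.swap_apply_left] using h3
  · by_cases hki' : k = i'
    · subst hki'
      simp only [Equiv.Perm.mul_apply, Equiv.swap_apply_right]
      linarith
    · simpa [Equiv.swap_apply_of_ne_of_ne hki hki'] using hk
end

section
/- Let Φ be a completely positive trace-preserving map on trace-class operators, and suppose that for every pure state |ψ⟩ (unit vector) there is a quantum state σ_ψ such that Φ(|ψ⟩⟨ψ|) = |ψ⟩⟨ψ| ⊗ σ_ψ. Then σ_ψ is independent of ψ: for any two unit vectors ψ, ψ′ with ⟨ψ|ψ′⟩ ≠ 0, σ_ψ = σ_{ψ′}. -/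
open Matrix Kronecker
open scoped ComplexOrder

/-- The trace norm `‖A‖₁ = tr √(AᴴA)` of a matrix. -/
noncomputable def traceNorm {I : Type*} [Fintype I] [DecidableEq I]
    (A : Matrix I I ℂ) : ℝ :=
  (((Matrix.posSemidef_conjTranspose_mul_self A).1.eigenvectorUnitary.1 *
    diagonal (((↑) : ℝ → ℂ) ∘ (Real.sqrt ∘ (Matrix.posSemidef_conjTranspose_mul_self A).1.eigenvalues)) *
    (star (Matrix.posSemidef_conjTranspose_mul_self A).1.eigenvectorUnitary : Matrix I I ℂ)).trace).re

/-!
By rescaling, `Φ(|v⟩⟨v|) = |v⟩⟨v| ⊗ τ_v` for every vector `v`, not only for unit vectors.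
If `ψ` is a multiple of `ψ'`, the two descriptions of `Φ(|ψ⟩⟨ψ|)` give `σ_ψ = σ_ψ'` directly.
Otherwise apply `Φ` to the parallelogram identity
`|ψ+ψ'⟩⟨ψ+ψ'| + |ψ-ψ'⟩⟨ψ-ψ'| = 2 |ψ⟩⟨ψ| + 2 |ψ'⟩⟨ψ'|`:
as `|ψ⟩⟨ψ|, |ψ⟩⟨ψ'|, |ψ'⟩⟨ψ|, |ψ'⟩⟨ψ'|` are linearly independent, comparing the coefficients
of `|ψ⟩⟨ψ|` and `|ψ'⟩⟨ψ'|` gives `2 σ_ψ = τ_{ψ+ψ'} + τ_{ψ-ψ'} = 2 σ_ψ'`.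
-/

namespace Matrix

variable {ι κ α β : Type*}

theorem kronecker_right_injective {R : Type*} [MonoidWithZero R] [IsLeftCancelMulZero R]
    {X : Matrix ι κ R}
    (hX : X ≠ 0) : Function.Injective (X ⊗ₖ · : Matrix α β R → Matrix (ι × α) (κ × β) R) := by
  obtain ⟨i, j, hij⟩ : ∃ i j, X i j ≠ 0 := by
    by_contra! h
    exact hX (ext h)
  intro A B hAB
  ext k l
  exact mul_left_cancel₀ hij (congr_fun₂ hAB (i, k) (j, l))

theorem kronecker_eq_zero_of_linearIndependent {K : Type*} [Field K] {u w : ι → K} {x y : κ → K}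
    (huw : LinearIndependent K ![u, w]) (hxy : LinearIndependent K ![x, y])
    {A B C D : Matrix α β K}
    (h : vecMulVec u x ⊗ₖ A + vecMulVec u y ⊗ₖ B + vecMulVec w x ⊗ₖ C + vecMulVec w y ⊗ₖ D = 0) :
    A = 0 ∧ B = 0 ∧ C = 0 ∧ D = 0 := by
  have hcol : ∀ j k l,
      (x j * A k l + y j * B k l) • u + (x j * C k l + y j * D k l) • w = 0 := by
    intro j k l
    ext i
    have hentry := congr_fun₂ h (i, k) (j, l)
    simp only [add_apply, kroneckerMap_apply, vecMulVec_apply, zero_apply] at hentry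
    simp only [Pi.add_apply, Pi.smul_apply, smul_eq_mul, Pi.zero_apply]
    linear_combination hentry
  have hrow : ∀ k l, A k l • x + B k l • y = 0 ∧ C k l • x + D k l • y = 0 := by
    intro k l
    have hcoeff := fun j ↦ LinearIndependent.pair_iff.mp huw _ _ (hcol j k l)
    constructor <;> ext j
    · simpa only [Pi.add_apply, Pi.smul_apply, smul_eq_mul, Pi.zero_apply, mul_comm]
        using (hcoeff j).1
    · simpa only [Pi.add_apply, Pi.smul_apply, smul_eq_mul, Pi.zero_apply, mul_comm]
        using (hcoeff j).2
  have hxy' := LinearIndependent.pair_iff.mp hxy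
  refine ⟨?_, ?_, ?_, ?_⟩ <;> ext k l
  exacts [(hxy' _ _ (hrow k l).1).1, (hxy' _ _ (hrow k l).1).2,
    (hxy' _ _ (hrow k l).2).1, (hxy' _ _ (hrow k l).2).2]

theorem vecMulVec_add_star_add_vecMulVec_sub_star_sub {R : Type*} [CommRing R] [StarRing R]
    (u w : ι → R) :
    vecMulVec (u + w) (star (u + w)) + vecMulVec (u - w) (star (u - w)) =
      (2 : R) • (vecMulVec u (star u) + vecMulVec w (star w)) := by
  ext i j
  simp only [add_apply, smul_apply, vecMulVec_apply, Pi.add_apply, Pi.sub_apply, Pi.star_apply,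
    star_add, star_sub, smul_eq_mul]
  ring

theorem vecMulVec_smul_star_smul {R : Type*} [CommRing R] [StarRing R] (c : R) (v : ι → R) :
    vecMulVec (c • v) (star (c • v)) = (c * star c) • vecMulVec v (star v) := by
  rw [star_smul, smul_vecMulVec, vecMulVec_smul, smul_smul]

end Matrix

theorem LinearIndependent.pair_star {ι K : Type*} [Field K] [StarRing K] {u w : ι → K}
    (h : LinearIndependent K ![u, w]) : LinearIndependent K ![star u, star w] := by
  refine LinearIndependent.pair_iff.mpr fun s t hst ↦ ?_
  have hstar : star s • u + star t • w = 0 := by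
    simpa only [star_add, star_smul, star_star, star_zero] using congrArg star hst
  simpa only [star_eq_zero] using LinearIndependent.pair_iff.mp h _ _ hstar

section UnitVectors

variable {ι : Type*} [Fintype ι]

theorem ne_zero_of_sum_norm_sq_eq_one {v : ι → ℂ} (hv : ∑ i, ‖v i‖ ^ 2 = 1) : v ≠ 0 := by
  rintro rfl
  simp at hv

theorem exists_eq_smul_sum_norm_sq_eq_one {v : ι → ℂ} (hv : v ≠ 0) :
    ∃ (c : ℂ) (u : ι → ℂ), ∑ i, ‖u i‖ ^ 2 = 1 ∧ v = c • u := by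
  set s := ∑ i, ‖v i‖ ^ 2
  have hs : 0 < s := by
    obtain ⟨i, hi⟩ := Function.ne_iff.mp hv
    exact Finset.sum_pos' (fun j _ ↦ by positivity)
      ⟨i, Finset.mem_univ i, pow_pos (norm_pos_iff.mpr hi) 2⟩
  have hc : ((Real.sqrt s : ℝ) : ℂ) ≠ 0 := by exact_mod_cast (Real.sqrt_pos.mpr hs).ne'
  refine ⟨Real.sqrt s, (Real.sqrt s : ℂ)⁻¹ • v, ?_, (smul_inv_smul₀ hc v).symm⟩
  simp only [Pi.smul_apply, smul_eq_mul, norm_mul, mul_pow, ← Finset.mul_sum, norm_inv,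
    Complex.norm_real, Real.norm_eq_abs, abs_of_nonneg (Real.sqrt_nonneg s), inv_pow,
    Real.sq_sqrt hs.le]
  exact inv_mul_cancel₀ hs.ne'

end UnitVectors

namespace ProductChannel

variable {ι α : Type*} (Φ : Matrix ι ι ℂ →ₗ[ℂ] Matrix (ι × α) (ι × α) ℂ)
  (σ : (ι → ℂ) → Matrix α α ℂ)

theorem map_vecMulVec_smul {v : ι → ℂ} {τ : Matrix α α ℂ}
    (h : Φ (vecMulVec v (star v)) = vecMulVec v (star v) ⊗ₖ τ) (c : ℂ) :
    Φ (vecMulVec (c • v) (star (c • v))) = vecMulVec (c • v) (star (c • v)) ⊗ₖ τ := by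
  rw [vecMulVec_smul_star_smul, map_smul, h, smul_kronecker]

variable {Φ σ} [Fintype ι]
  (hΦ : ∀ u : ι → ℂ, ∑ i, ‖u i‖ ^ 2 = 1 →
    Φ (vecMulVec u (star u)) = vecMulVec u (star u) ⊗ₖ σ u)
include hΦ

theorem exists_map_vecMulVec_eq_kronecker (v : ι → ℂ) :
    ∃ τ, Φ (vecMulVec v (star v)) = vecMulVec v (star v) ⊗ₖ τ := by
  rcases eq_or_ne v 0 with rfl | hv
  · exact ⟨0, by simp⟩
  obtain ⟨c, u, hu, rfl⟩ := exists_eq_smul_sum_norm_sq_eq_one hv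
  exact ⟨σ u, map_vecMulVec_smul Φ (hΦ u hu) c⟩

theorem factor_smul_eq {ψ : ι → ℂ} {c : ℂ} (hψ : ∑ i, ‖ψ i‖ ^ 2 = 1)
    (hcψ : ∑ i, ‖(c • ψ) i‖ ^ 2 = 1) : σ (c • ψ) = σ ψ := by
  have hcψ0 := ne_zero_of_sum_norm_sq_eq_one hcψ
  refine kronecker_right_injective (vecMulVec_ne_zero hcψ0 (star_ne_zero.mpr hcψ0)) ?_
  exact (hΦ _ hcψ).symm.trans (map_vecMulVec_smul Φ (hΦ ψ hψ) c)

theorem factor_eq_of_linearIndependent {ψ ψ' : ι → ℂ} (hψ : ∑ i, ‖ψ i‖ ^ 2 = 1)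
    (hψ' : ∑ i, ‖ψ' i‖ ^ 2 = 1) (hind : LinearIndependent ℂ ![ψ, ψ']) : σ ψ = σ ψ' := by
  obtain ⟨τ₁, h₁⟩ := exists_map_vecMulVec_eq_kronecker hΦ (ψ + ψ')
  obtain ⟨τ₂, h₂⟩ := exists_map_vecMulVec_eq_kronecker hΦ (ψ - ψ')
  have hmap := congrArg Φ (vecMulVec_add_star_add_vecMulVec_sub_star_sub ψ ψ')
  rw [map_add, map_smul, map_add, h₁, h₂, hΦ ψ hψ, hΦ ψ' hψ'] at hmap
  have hcoeff : vecMulVec ψ (star ψ) ⊗ₖ (τ₁ + τ₂ - (2 : ℂ) • σ ψ) +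
      vecMulVec ψ (star ψ') ⊗ₖ (τ₁ - τ₂) + vecMulVec ψ' (star ψ) ⊗ₖ (τ₁ - τ₂) +
      vecMulVec ψ' (star ψ') ⊗ₖ (τ₁ + τ₂ - (2 : ℂ) • σ ψ') = 0 := by
    ext ⟨i, k⟩ ⟨j, l⟩
    have hentry := congr_fun₂ hmap (i, k) (j, l)
    simp only [Matrix.add_apply, Matrix.sub_apply, Matrix.smul_apply, kroneckerMap_apply,
      vecMulVec_apply, Pi.add_apply, Pi.sub_apply, Pi.star_apply, star_add, star_sub, smul_eq_mul,
      Matrix.zero_apply] at hentry ⊢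
    linear_combination hentry
  obtain ⟨hσψ, -, -, hσψ'⟩ := kronecker_eq_zero_of_linearIndependent hind hind.pair_star hcoeff
  have h2 : (2 : ℂ) • σ ψ = (2 : ℂ) • σ ψ' := by
    rw [sub_eq_zero] at hσψ hσψ'
    rw [← hσψ, hσψ']
  exact smul_right_injective _ two_ne_zero h2

end ProductChannel

theorem stmt7_general {n m : ℕ}
    (Φ : Matrix (Fin n) (Fin n) ℂ →ₗ[ℂ] Matrix (Fin n × Fin m) (Fin n × Fin m) ℂ)
    (σ : (Fin n → ℂ) → Matrix (Fin m) (Fin m) ℂ)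
    (hσ : ∀ ψ : Fin n → ℂ, (∑ i, ‖ψ i‖ ^ 2) = 1 →
      (σ ψ).PosSemidef ∧ (σ ψ).trace = 1 ∧
        Φ (Matrix.vecMulVec ψ (star ψ)) = (Matrix.vecMulVec ψ (star ψ)) ⊗ₖ σ ψ) :
    ∀ ψ ψ' : Fin n → ℂ, (∑ i, ‖ψ i‖ ^ 2) = 1 → (∑ i, ‖ψ' i‖ ^ 2) = 1 →
      (∑ i, star (ψ i) * ψ' i) ≠ 0 → σ ψ = σ ψ' := by
  intro ψ ψ' hψ hψ' _
  have hΦ : ∀ u : Fin n → ℂ, ∑ i, ‖u i‖ ^ 2 = 1 →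
      Φ (vecMulVec u (star u)) = vecMulVec u (star u) ⊗ₖ σ u :=
    fun u hu ↦ (hσ u hu).2.2
  by_cases hind : LinearIndependent ℂ ![ψ, ψ']
  · exact ProductChannel.factor_eq_of_linearIndependent hΦ hψ hψ' hind
  · obtain ⟨c, rfl⟩ : ∃ c : ℂ, c • ψ' = ψ := by
      simpa [linearIndependent_fin2, ne_zero_of_sum_norm_sq_eq_one hψ'] using hind
    exact ProductChannel.factor_smul_eq hΦ hψ' hψ

/-- If a trace-norm-contractive linear (CPTP) map `Φ` sends every pure state `|ψ⟩⟨ψ|` to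
`|ψ⟩⟨ψ| ⊗ σ_ψ` for some state `σ_ψ`, then `σ_ψ` is independent of `ψ`: it coincides for any
two non-orthogonal unit vectors. -/
theorem stmt7 {n m : ℕ}
    (Φ : Matrix (Fin n) (Fin n) ℂ →ₗ[ℂ] Matrix (Fin n × Fin m) (Fin n × Fin m) ℂ)
    (hcontr : ∀ A, traceNorm (Φ A) ≤ traceNorm A)
    (σ : (Fin n → ℂ) → Matrix (Fin m) (Fin m) ℂ)
    (hσ : ∀ ψ : Fin n → ℂ, (∑ i, ‖ψ i‖ ^ 2) = 1 →
      (σ ψ).PosSemidef ∧ (σ ψ).trace = 1 ∧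
        Φ (Matrix.vecMulVec ψ (star ψ)) = (Matrix.vecMulVec ψ (star ψ)) ⊗ₖ σ ψ) :
    ∀ ψ ψ' : Fin n → ℂ, (∑ i, ‖ψ i‖ ^ 2) = 1 → (∑ i, ‖ψ' i‖ ^ 2) = 1 →
      (∑ i, star (ψ i) * ψ' i) ≠ 0 → σ ψ = σ ψ' :=
  stmt7_general Φ σ hσ
end

section
/- For a trace-class operator ρ on L²(ℝ) and the projection Π = Θ(−X) onto functions supported in (−∞,0], suppose tr(Θ(−X)ρ) = 1 − ε with 0 ≤ ε < 1 and ρ = |ψ⟩⟨ψ| a pure state. Define ρ̂ = Θ(−X)ρΘ(−X)/(1−ε). Then for any self-adjoint bounded operator Ω with ‖Ω‖ ≤ 1, tr(ρ̂ Ω) ≥ tr(ρΩ)/(1−ε) − 2√(ε/(1−ε)) − ε/(1−ε). -/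
/-!
Split `ψ = Pψ + (ψ - Pψ)`. Since `P` is an orthogonal projection, `‖Pψ‖² = 1 - ε` and
`‖ψ - Pψ‖² = ε`. Expanding `⟨ψ, Ωψ⟩` bilinearly, each of the two cross terms is at most
`‖Pψ‖ ‖ψ - Pψ‖ = √(ε(1 - ε))` and the remaining term is at most `‖ψ - Pψ‖² = ε`, because
`‖Ω‖ ≤ 1`. Dividing by `1 - ε` gives the bound.
-/

open RCLike

section Projection

variable {𝕜 E : Type*} [RCLike 𝕜] [NormedAddCommGroup E] [InnerProductSpace 𝕜 E]
  {P : E →L[𝕜] E}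

theorem norm_map_sq_eq_re_inner_of_idempotent (hPidem : ∀ v, P (P v) = P v)
    (hPsa : ∀ v w : E, (inner 𝕜 (P v) w : 𝕜) = inner 𝕜 v (P w)) (v : E) :
    ‖P v‖ ^ 2 = re (inner 𝕜 v (P v) : 𝕜) := by
  rw [← inner_self_eq_norm_sq (𝕜 := 𝕜), hPsa, hPidem]

theorem norm_sub_map_sq_of_idempotent (hPidem : ∀ v, P (P v) = P v)
    (hPsa : ∀ v w : E, (inner 𝕜 (P v) w : 𝕜) = inner 𝕜 v (P w)) (v : E) :
    ‖v - P v‖ ^ 2 = ‖v‖ ^ 2 - re (inner 𝕜 v (P v) : 𝕜) := by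
  rw [@norm_sub_sq 𝕜, norm_map_sq_eq_re_inner_of_idempotent hPidem hPsa]
  ring

end Projection

section Contraction

variable {𝕜 E : Type*} [RCLike 𝕜] [NormedAddCommGroup E] [InnerProductSpace 𝕜 E]
  {Ω : E →L[𝕜] E}

theorem re_inner_map_le_of_opNorm_le_one (hΩ : ‖Ω‖ ≤ 1) (a b : E) :
    re (inner 𝕜 a (Ω b) : 𝕜) ≤ ‖a‖ * ‖b‖ :=
  calc re (inner 𝕜 a (Ω b) : 𝕜) ≤ ‖(inner 𝕜 a (Ω b) : 𝕜)‖ := re_le_norm _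
    _ ≤ ‖a‖ * ‖Ω b‖ := norm_inner_le_norm a (Ω b)
    _ ≤ ‖a‖ * ‖b‖ := by
      gcongr
      exact Ω.le_of_opNorm_le hΩ b |>.trans_eq (one_mul _)

theorem re_inner_map_add_le_of_opNorm_le_one (hΩ : ‖Ω‖ ≤ 1) (a b : E) :
    re (inner 𝕜 (a + b) (Ω (a + b)) : 𝕜) ≤
      re (inner 𝕜 a (Ω a) : 𝕜) + 2 * (‖a‖ * ‖b‖) + ‖b‖ ^ 2 := by
  have hab := re_inner_map_le_of_opNorm_le_one hΩ a b
  have hba := re_inner_map_le_of_opNorm_le_one hΩ b a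
  have hbb := re_inner_map_le_of_opNorm_le_one hΩ b b
  simp only [map_add, inner_add_left, inner_add_right]
  linarith

end Contraction

theorem stmt8_general {H : Type*} [NormedAddCommGroup H] [InnerProductSpace ℂ H]
    (P Ω : H →L[ℂ] H)
    (hPidem : ∀ v, P (P v) = P v)
    (hPsa : ∀ v w : H, (inner ℂ (P v) w : ℂ) = inner ℂ v (P w))
    (hΩn : ‖Ω‖ ≤ 1)
    (ψ : H) (hψ : ‖ψ‖ = 1) (ε : ℝ)
    (hε : ε = 1 - (inner ℂ ψ (P ψ) : ℂ).re) (hε1 : ε < 1) :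
    (inner ℂ (P ψ) (Ω (P ψ)) : ℂ).re / (1 - ε) ≥
      (inner ℂ ψ (Ω ψ) : ℂ).re / (1 - ε) - 2 * Real.sqrt (ε / (1 - ε)) - ε / (1 - ε) := by
  have hp : ‖P ψ‖ ^ 2 = 1 - ε := by
    rw [norm_map_sq_eq_re_inner_of_idempotent hPidem hPsa, hε]
    simp
  have hq : ‖ψ - P ψ‖ ^ 2 = ε := by
    rw [norm_sub_map_sq_of_idempotent hPidem hPsa, hψ, hε]
    simp
  have hp0 : 0 < ‖P ψ‖ := by nlinarith [norm_nonneg (P ψ)]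
  have hsqrt : Real.sqrt (ε / (1 - ε)) = ‖ψ - P ψ‖ / ‖P ψ‖ := by
    rw [← hp, ← hq, Real.sqrt_div' _ (by positivity), Real.sqrt_sq (norm_nonneg _),
      Real.sqrt_sq (norm_nonneg _)]
  have hsplit := re_inner_map_add_le_of_opNorm_le_one hΩn (P ψ) (ψ - P ψ)
  rw [add_sub_cancel, hq] at hsplit
  simp only [re_to_complex] at hsplit
  rw [ge_iff_le, hsqrt, ← hp]
  field_simp
  linarith

/-- For a projection `P`, a unit vector `ψ` with `ε = 1 - ⟨ψ|P|ψ⟩ ∈ [0,1)`, and a self-adjoint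
operator `Ω` with `‖Ω‖ ≤ 1`, the projected normalized state `ρ̂ = PρP/(1-ε)` satisfies
`tr(ρ̂Ω) ≥ tr(ρΩ)/(1-ε) - 2√(ε/(1-ε)) - ε/(1-ε)`. -/
theorem stmt8 {H : Type*} [NormedAddCommGroup H] [InnerProductSpace ℂ H]
    (P Ω : H →L[ℂ] H)
    (hPidem : ∀ v, P (P v) = P v)
    (hPsa : ∀ v w : H, (inner ℂ (P v) w : ℂ) = inner ℂ v (P w))
    (hΩsa : ∀ v w : H, (inner ℂ (Ω v) w : ℂ) = inner ℂ v (Ω w))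
    (hΩn : ‖Ω‖ ≤ 1)
    (ψ : H) (hψ : ‖ψ‖ = 1) (ε : ℝ)
    (hε : ε = 1 - (inner ℂ ψ (P ψ) : ℂ).re) (hε0 : 0 ≤ ε) (hε1 : ε < 1) :
    (inner ℂ (P ψ) (Ω (P ψ)) : ℂ).re / (1 - ε) ≥
      (inner ℂ ψ (Ω ψ) : ℂ).re / (1 - ε) - 2 * Real.sqrt (ε / (1 - ε)) - ε / (1 - ε) :=
  stmt8_general P Ω hPidem hPsa hΩn ψ hψ ε hε hε1
end

section
/- Let F and G be the 2×2 Hermitian matrices F_{jk} = ⟨ψ_j|ψ₀⟩⟨ψ₁|ψ_k⟩ + ⟨ψ_j|ψ₁⟩⟨ψ₀|ψ_k⟩ and G_{jk} = ⟨ψ_j|ψ_k⟩, where ψ₀(x) = 1 and ψ₁(x) = x on [−√α, 0] (so ⟨ψ₀|ψ₀⟩ = √α, ⟨ψ₀|ψ₁⟩ = −α/2, ⟨ψ₁|ψ₁⟩ = α^{3/2}/3). Then the smallest λ with λG − F ⪰ 0 equals ((2√3 − 3)/6)·α. -/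
/-!
Writing `s = √α`, the matrix `λG - F` is `!![s(λ+α), b; b, αs(λ+α)/3]` with
`b = -(αλ/2 + 7α²/12)`, and a real symmetric `2 × 2` matrix is positive semidefinite exactly when
its diagonal and its determinant are nonnegative. The diagonal condition is `-α ≤ λ` and the
determinant is `α²(12λ² + 12αλ - α²)/144`, whose roots are `(-3 ± 2√3)α/6`; the smaller root lies
below `-α`, so the feasible `λ` are exactly those above the larger one.
-/

open Matrix

theorem Matrix.posSemidef_fin_two_iff {a b c : ℝ} :
    !![a, b; b, c].PosSemidef ↔ 0 ≤ a ∧ 0 ≤ c ∧ b ^ 2 ≤ a * c := by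
  constructor
  · intro h
    have hdet := h.det_nonneg
    rw [det_fin_two_of] at hdet
    exact ⟨by simpa using h.diag_nonneg (i := 0), by simpa using h.diag_nonneg (i := 1),
      by linarith⟩
  · rintro ⟨ha, hc, hb⟩
    refine posSemidef_iff_dotProduct_mulVec.mpr ⟨?_, fun x => ?_⟩
    · ext i j
      fin_cases i <;> fin_cases j <;> rfl
    · simp only [dotProduct, mulVec, Fin.sum_univ_two, of_apply, cons_val', cons_val_zero,
        cons_val_one, empty_val', cons_val_fin_one, Pi.star_apply, star_trivial]
      -- `a · Q(x) = (a x₀ + b x₁)² + (ac - b²) x₁²`, and `b = 0` when `a = 0`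
      rcases ha.lt_or_eq with ha | rfl
      · nlinarith [sq_nonneg (a * x 0 + b * x 1), mul_nonneg (sub_nonneg.mpr hb) (sq_nonneg (x 1))]
      · obtain rfl : b = 0 := by nlinarith
        nlinarith [mul_nonneg hc (sq_nonneg (x 1))]

theorem smul_gram_sub_F_eq {α : ℝ} (hα : 0 ≤ α) (l : ℝ) :
    l • !![Real.sqrt α, -α / 2; -α / 2, α * Real.sqrt α / 3] -
        !![2 * Real.sqrt α * (-α / 2),
            Real.sqrt α * (α * Real.sqrt α / 3) + (-α / 2) ^ 2;
           α * Real.sqrt α / 3 * Real.sqrt α + (-α / 2) ^ 2,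
            2 * (-α / 2) * (α * Real.sqrt α / 3)] =
      !![Real.sqrt α * (l + α), -(α * l / 2 + 7 * α ^ 2 / 12);
        -(α * l / 2 + 7 * α ^ 2 / 12), α * Real.sqrt α * (l + α) / 3] := by
  obtain ⟨s, hs, rfl⟩ : ∃ s, 0 ≤ s ∧ s ^ 2 = α := ⟨_, Real.sqrt_nonneg α, Real.sq_sqrt hα⟩
  rw [Real.sqrt_sq hs]
  ext i j
  fin_cases i <;> fin_cases j <;> simp <;> ring

theorem posSemidef_smul_gram_sub_F_iff {α : ℝ} (hα : 0 < α) (l : ℝ) :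
    !![Real.sqrt α * (l + α), -(α * l / 2 + 7 * α ^ 2 / 12);
        -(α * l / 2 + 7 * α ^ 2 / 12), α * Real.sqrt α * (l + α) / 3].PosSemidef ↔
      -α ≤ l ∧ 0 ≤ 12 * l ^ 2 + 12 * α * l - α ^ 2 := by
  have hs0 := Real.sqrt_pos.mpr hα
  have hs := Real.mul_self_sqrt hα.le
  rw [Matrix.posSemidef_fin_two_iff]
  have hdet : Real.sqrt α * (l + α) * (α * Real.sqrt α * (l + α) / 3) -
      (-(α * l / 2 + 7 * α ^ 2 / 12)) ^ 2 = α ^ 2 * (12 * l ^ 2 + 12 * α * l - α ^ 2) / 144 := by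
    linear_combination (α * (l + α) ^ 2 / 3) * hs
  have hα2 : 0 < α ^ 2 / 144 := by positivity
  constructor
  · rintro ⟨h₀, -, hb⟩
    exact ⟨by nlinarith, by nlinarith⟩
  · rintro ⟨hl, hq⟩
    have hla : 0 ≤ l + α := by linarith
    exact ⟨by positivity, by positivity, by nlinarith⟩

theorem neg_le_and_quadratic_nonneg_iff {α : ℝ} (hα : 0 < α) (l : ℝ) :
    -α ≤ l ∧ 0 ≤ 12 * l ^ 2 + 12 * α * l - α ^ 2 ↔ (2 * Real.sqrt 3 - 3) / 6 * α ≤ l := by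
  have ht : Real.sqrt 3 * Real.sqrt 3 = 3 := Real.mul_self_sqrt (by norm_num)
  have ht0 := Real.sqrt_nonneg 3
  have hfac : 12 * l ^ 2 + 12 * α * l - α ^ 2 =
      12 * (l - (2 * Real.sqrt 3 - 3) / 6 * α) * (l + (2 * Real.sqrt 3 + 3) / 6 * α) := by
    linear_combination (4 * α ^ 2 / 3) * ht
  have hr : -α ≤ (2 * Real.sqrt 3 - 3) / 6 * α := by nlinarith
  constructor
  · rintro ⟨hl, hq⟩
    have hpos : 0 < 12 * (l + (2 * Real.sqrt 3 + 3) / 6 * α) := by nlinarith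
    rwa [hfac, mul_comm 12, mul_assoc, mul_nonneg_iff_of_pos_right hpos, sub_nonneg] at hq
  · intro hl
    refine ⟨hr.trans hl, ?_⟩
    rw [hfac]
    exact mul_nonneg (mul_nonneg (by norm_num) (sub_nonneg.mpr hl)) (by nlinarith)

/-- With `⟨ψ₀|ψ₀⟩ = √α`, `⟨ψ₀|ψ₁⟩ = -α/2`, `⟨ψ₁|ψ₁⟩ = α^{3/2}/3`, the least `λ` with
`λG - F ⪰ 0` (for `F_{jk} = ⟨ψ_j|ψ₀⟩⟨ψ₁|ψ_k⟩ + ⟨ψ_j|ψ₁⟩⟨ψ₀|ψ_k⟩` and `G` the Gram matrix)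
equals `((2√3 - 3)/6)·α`. -/
theorem stmt13 (α : ℝ) (hα : 0 < α) :
    IsLeast {l : ℝ |
      (l • (!![Real.sqrt α, -α / 2; -α / 2, α * Real.sqrt α / 3]) -
        !![2 * Real.sqrt α * (-α / 2),
            Real.sqrt α * (α * Real.sqrt α / 3) + (-α / 2) ^ 2;
           α * Real.sqrt α / 3 * Real.sqrt α + (-α / 2) ^ 2,
            2 * (-α / 2) * (α * Real.sqrt α / 3)]).PosSemidef}
      ((2 * Real.sqrt 3 - 3) / 6 * α) := by
  simp only [smul_gram_sub_F_eq hα.le, posSemidef_smul_gram_sub_F_iff hα,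
    neg_le_and_quadratic_nonneg_iff hα]
  exact isLeast_Ici
end

section
/- Let μ, ν̃ be probability density functions on ℝ (nonnegative, integrable, integral 1) and a ∈ ℝ. Define s, q : ℝ → ℝ by the ODE system s′(x) = Θ₊(q(x))μ(x) + (1 − Θ₊(q(x)))·min(μ(x), ν̃(a−x)), q′(x) = Θ₊(q(x))(ν̃(a−x) − μ(x)) + (1 − Θ₊(q(x)))·max(ν̃(a−x) − μ(x), 0), with s(−∞) = q(−∞) = 0 and Θ₊(z) = 1 for z > 0, 0 otherwise. Then q(x) ≥ 0 for all x, s is nondecreasing, and s(x) ≤ min(∫_{−∞}^x μ(t) dt, ∫_{a−x}^{∞} ν̃(t) dt + q(x)) for all x; in particular lim_{x→∞} s(x) ≤ 1. -/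
/-!
The delicate point is measurability, since the integrand defining `q` depends on `q`. Where it is
not integrable on `(-∞, x]`, the Bochner integral makes `q x = 0`, so there the integrand is the
measurable `max (ν̃(a - x) - μ x) 0`; on the lower set where it is integrable it is locally
integrable. Dominated by `μ + ν̃(a - ·)`, it is therefore integrable, `q` is continuous, and
`q ≥ 0` because `q' ≥ 0` wherever `q ≤ 0`. The pointwise facts `0 ≤ s' ≤ μ` and
`s' + q' = ν̃(a - ·)` integrate to the remaining claims.
-/

open MeasureTheory Filter

/-- `Θ₊(z) = 1` for `z > 0`, else `0`. -/
noncomputable def Θp (z : ℝ) : ℝ := if 0 < z then 1 else 0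

open Set

lemma measurable_Θp : Measurable Θp :=
  Measurable.ite measurableSet_Ioi measurable_const measurable_const

section Rates

/-- The right-hand side of the equation for `q'` at a point where `μ = m`, `ν̃(a - x) = n` and
`q = z`. -/
noncomputable def qRate (m n z : ℝ) : ℝ := Θp z * (n - m) + (1 - Θp z) * max (n - m) 0

/-- The right-hand side of the equation for `s'`, in the notation of `qRate`. -/
noncomputable def sRate (m n z : ℝ) : ℝ := Θp z * m + (1 - Θp z) * min m n

variable {m n z : ℝ}

lemma qRate_of_pos (hz : 0 < z) : qRate m n z = n - m := by
  simp [qRate, Θp, hz]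

lemma qRate_of_nonpos (hz : z ≤ 0) : qRate m n z = max (n - m) 0 := by
  simp [qRate, Θp, hz.not_gt]

lemma sRate_of_pos (hz : 0 < z) : sRate m n z = m := by
  simp [sRate, Θp, hz]

lemma sRate_of_nonpos (hz : z ≤ 0) : sRate m n z = min m n := by
  simp [sRate, Θp, hz.not_gt]

lemma qRate_nonneg_of_nonpos (hz : z ≤ 0) : 0 ≤ qRate m n z :=
  qRate_of_nonpos hz ▸ le_max_right _ _

lemma sRate_le : sRate m n z ≤ m := by
  rcases lt_or_ge 0 z with hz | hz
  · exact (sRate_of_pos hz).le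
  · exact (sRate_of_nonpos hz).trans_le (min_le_left _ _)

lemma sRate_nonneg (hm : 0 ≤ m) (hn : 0 ≤ n) : 0 ≤ sRate m n z := by
  rcases lt_or_ge 0 z with hz | hz
  · exact (sRate_of_pos hz).symm ▸ hm
  · exact (sRate_of_nonpos hz).symm ▸ le_min hm hn

lemma abs_qRate_le (hm : 0 ≤ m) (hn : 0 ≤ n) : |qRate m n z| ≤ m + n := by
  rcases lt_or_ge 0 z with hz | hz
  · rw [qRate_of_pos hz, abs_le]
    constructor <;> linarith
  · rw [qRate_of_nonpos hz, abs_of_nonneg (le_max_right _ _)]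
    exact max_le (by linarith) (by linarith)

lemma sRate_add_qRate : sRate m n z + qRate m n z = n := by
  rcases lt_or_ge 0 z with hz | hz
  · rw [sRate_of_pos hz, qRate_of_pos hz]
    ring
  · rw [sRate_of_nonpos hz, qRate_of_nonpos hz]
    rcases le_total m n with h | h
    · rw [min_eq_left h, max_eq_left (by linarith)]
      ring
    · rw [min_eq_right h, max_eq_right (by linarith)]
      ring

end Rates

section PrimitiveIic

variable {α E : Type*} [LinearOrder α] [TopologicalSpace α] [OrderTopology α]
  [MeasurableSpace α] [NormedAddCommGroup E] {μ : Measure α}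

lemma locallyIntegrableOn_setOf_integrableOn_Iic (f : α → E) :
    LocallyIntegrableOn f {x | IntegrableOn f (Iic x) μ} μ := by
  intro x hx
  by_cases h : ∃ y, IntegrableOn f (Iic y) μ ∧ x < y
  · obtain ⟨y, hy, hxy⟩ := h
    exact ⟨Iic y, mem_nhdsWithin_of_mem_nhds (Iic_mem_nhds hxy), hy⟩
  · push Not at h
    exact ⟨_, self_mem_nhdsWithin, hx.mono_set h⟩

lemma AEStronglyMeasurable.of_eq_of_not_integrableOn_Iic [SecondCountableTopology α]
    [OpensMeasurableSpace α] {f g : α → E} (hg : AEStronglyMeasurable g μ)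
    (hfg : ∀ x, ¬ IntegrableOn f (Iic x) μ → f x = g x) : AEStronglyMeasurable f μ := by
  set A := {x | IntegrableOn f (Iic x) μ}
  have hA : MeasurableSet A :=
    IsLowerSet.ordConnected (fun _ _ hyx hx => hx.mono_set (Iic_subset_Iic.2 hyx)) |>.measurableSet
  rw [← Measure.restrict_univ (μ := μ), ← union_compl_self A, aestronglyMeasurable_union_iff]
  exact ⟨(locallyIntegrableOn_setOf_integrableOn_Iic f).aestronglyMeasurable,
    hg.restrict.congr ((ae_restrict_iff' hA.compl).2 (ae_of_all _ fun x hx => (hfg x hx).symm))⟩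

end PrimitiveIic

lemma monotone_integral_Iic {α : Type*} [Preorder α] [MeasurableSpace α] {μ : Measure α}
    {g : α → ℝ} (hg : Integrable g μ) (h0 : 0 ≤ᵐ[μ] g) :
    Monotone fun x => ∫ t in Iic x, g t ∂μ := fun _ _ hxy =>
  setIntegral_mono_set hg.integrableOn (ae_restrict_of_ae h0) (Iic_subset_Iic.2 hxy).eventuallyLE

lemma continuous_integral_Iic {E : Type*} [NormedAddCommGroup E] [NormedSpace ℝ E]
    {μ : Measure ℝ} [NullSingletonClass μ] {f : ℝ → E} (hf : Integrable f μ) :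
    Continuous fun x => ∫ t in Iic x, f t ∂μ :=
  continuous_iff_continuousAt.2 fun x =>
    (hf.integrableOn.continuousOn_Iic_primitive_Iic (a₀ := x + 1)).continuousAt
      (Iic_mem_nhds (lt_add_one x))

/-- At the last point `c ≤ x` with `0 ≤ q c`, the integrand is nonnegative on `(c, x]`. -/
lemma nonneg_of_forall_eq_integral_Iic {μ : Measure ℝ} [NullSingletonClass μ]
    {f q : ℝ → ℝ} (hf : Integrable f μ) (hq : ∀ x, q x = ∫ t in Iic x, f t ∂μ)
    (hfq : ∀ t, q t ≤ 0 → 0 ≤ f t) (x : ℝ) : 0 ≤ q x := by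
  have hq_cont : Continuous q := by
    simpa only [← funext hq] using continuous_integral_Iic hf
  set S := Iic x ∩ {t | 0 ≤ q t}
  rcases S.eq_empty_or_nonempty with hS | hS
  · rw [hq x]
    exact setIntegral_nonneg measurableSet_Iic fun t ht =>
      hfq t (not_lt.1 fun h : 0 < q t => eq_empty_iff_forall_notMem.1 hS t ⟨ht, h.le⟩)
  have hS_bdd : BddAbove S := ⟨x, fun t ht => ht.1⟩
  obtain ⟨hcx, hc⟩ : sSup S ∈ S :=
    (isClosed_Iic.inter (isClosed_le continuous_const hq_cont)).csSup_mem hS hS_bdd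
  have hf_nonneg : ∀ t ∈ Ioc (sSup S) x, 0 ≤ f t := fun t ht =>
    hfq t (not_lt.1 fun h : 0 < q t => ht.1.not_ge (le_csSup hS_bdd ⟨ht.2, h.le⟩))
  have hsplit : q x = q (sSup S) + ∫ t in Ioc (sSup S) x, f t ∂μ := by
    rw [hq x, hq (sSup S), ← setIntegral_union (Iic_disjoint_Ioc le_rfl) measurableSet_Ioc
      hf.integrableOn hf.integrableOn, Iic_union_Ioc_eq_Iic hcx]
  exact hsplit ▸ add_nonneg hc (setIntegral_nonneg measurableSet_Ioc hf_nonneg)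

lemma integral_Iic_comp_sub_left {E : Type*} [NormedAddCommGroup E] [NormedSpace ℝ E]
    (f : ℝ → E) (a x : ℝ) : ∫ t in Iic x, f (a - t) = ∫ t in Ici (a - x), f t := by
  have hpre : (fun t => a - t) ⁻¹' Ici (a - x) = Iic x := by
    ext t
    simp
  rw [← hpre, (Measure.measurePreserving_sub_left volume a).setIntegral_preimage_emb
    (Homeomorph.subLeft a).measurableEmbedding]

section Solution

variable {μ ν q : ℝ → ℝ} {a : ℝ}

lemma integrable_qRate (hμ0 : ∀ x, 0 ≤ μ x) (hν0 : ∀ x, 0 ≤ ν x) (hμi : Integrable μ)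
    (hνi : Integrable ν) (hq : ∀ x, q x = ∫ t in Iic x, qRate (μ t) (ν (a - t)) (q t)) :
    Integrable fun t => qRate (μ t) (ν (a - t)) (q t) := by
  have hν' : Integrable fun t => ν (a - t) := hνi.comp_sub_left a
  refine (hμi.add hν').mono' ?_ (ae_of_all _ fun t => abs_qRate_le (hμ0 t) (hν0 _))
  -- `q x = 0` by convention where the rate is not integrable on `Iic x`, so there it is explicit
  refine AEStronglyMeasurable.of_eq_of_not_integrableOn_Iic
    (g := fun t => max (ν (a - t) - μ t) 0)
    ((hν'.aestronglyMeasurable.sub hμi.aestronglyMeasurable).sup aestronglyMeasurable_const)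
    fun x hx => ?_
  rw [hq x, integral_undef hx, qRate_of_nonpos le_rfl]

lemma integrable_sRate (hμ0 : ∀ x, 0 ≤ μ x) (hν0 : ∀ x, 0 ≤ ν x) (hμi : Integrable μ)
    (hνi : Integrable ν) (hq_cont : Continuous q) :
    Integrable fun t => sRate (μ t) (ν (a - t)) (q t) := by
  have hΘ : AEStronglyMeasurable (fun t => Θp (q t)) :=
    (measurable_Θp.comp hq_cont.measurable).aestronglyMeasurable
  have hν' : AEStronglyMeasurable fun t => ν (a - t) :=
    (hνi.comp_sub_left a).aestronglyMeasurable
  refine hμi.mono' ?_ (ae_of_all _ fun t => ?_)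
  · exact (hΘ.mul hμi.aestronglyMeasurable).add
      ((aestronglyMeasurable_const.sub hΘ).mul (hμi.aestronglyMeasurable.inf hν'))
  · rw [Real.norm_of_nonneg (sRate_nonneg (hμ0 t) (hν0 _))]
    exact sRate_le

end Solution

theorem stmt18_general (μ νt : ℝ → ℝ) (a : ℝ)
    (hμ0 : ∀ x, 0 ≤ μ x) (hν0 : ∀ x, 0 ≤ νt x)
    (hμi : Integrable μ) (hνi : Integrable νt)
    (hμ1 : (∫ x, μ x) = 1)
    (s q : ℝ → ℝ)
    (hq : ∀ x, q x = ∫ t in Set.Iic x,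
        (Θp (q t) * (νt (a - t) - μ t) + (1 - Θp (q t)) * max (νt (a - t) - μ t) 0))
    (hs : ∀ x, s x = ∫ t in Set.Iic x,
        (Θp (q t) * μ t + (1 - Θp (q t)) * min (μ t) (νt (a - t)))) :
    (∀ x, 0 ≤ q x) ∧ Monotone s ∧
    (∀ x, s x ≤ min (∫ t in Set.Iic x, μ t) ((∫ t in Set.Ici (a - x), νt t) + q x)) ∧
    Filter.limsup s Filter.atTop ≤ 1 := by
  change ∀ x, q x = ∫ t in Iic x, qRate (μ t) (νt (a - t)) (q t) at hq
  change ∀ x, s x = ∫ t in Iic x, sRate (μ t) (νt (a - t)) (q t) at hs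
  have hf := integrable_qRate hμ0 hν0 hμi hνi hq
  have hq_cont : Continuous q := by
    simpa only [← funext hq] using continuous_integral_Iic hf
  have hg := integrable_sRate (a := a) hμ0 hν0 hμi hνi hq_cont
  have hg0 : ∀ t, 0 ≤ sRate (μ t) (νt (a - t)) (q t) := fun t =>
    sRate_nonneg (hμ0 t) (hν0 _)
  have hq_nonneg : ∀ x, 0 ≤ q x :=
    nonneg_of_forall_eq_integral_Iic hf hq fun t ht => qRate_nonneg_of_nonpos ht
  have hs_le_μ : ∀ x, s x ≤ ∫ t in Iic x, μ t := fun x =>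
    (hs x).trans_le (setIntegral_mono hg.integrableOn hμi.integrableOn fun t => sRate_le)
  have hs_add_q : ∀ x, s x + q x = ∫ t in Ici (a - x), νt t := fun x => by
    rw [hs x, hq x, ← integral_add hg.integrableOn hf.integrableOn,
      ← integral_Iic_comp_sub_left]
    simp only [sRate_add_qRate]
  have hs_le_one : ∀ x, s x ≤ 1 := fun x =>
    (hs_le_μ x).trans (hμ1 ▸ setIntegral_le_integral hμi (ae_of_all _ hμ0))
  have hs_nonneg : ∀ x, 0 ≤ s x := fun x =>
    (hs x).symm ▸ setIntegral_nonneg measurableSet_Iic fun t _ => hg0 t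
  refine ⟨hq_nonneg, funext hs ▸ monotone_integral_Iic hg (ae_of_all _ hg0),
    fun x => le_min (hs_le_μ x) (by linarith [hs_add_q x, hq_nonneg x]), ?_⟩
  exact limsup_le_of_le (isCoboundedUnder_le_of_le atTop hs_nonneg) (.of_forall hs_le_one)

/-- Properties of the Carathéodory solution of the ODE system computing the maximal classical
arrival probability: `q ≥ 0`, `s` is nondecreasing, `s` is bounded by both cumulative masses,
and the limit of `s` at `+∞` is at most `1`. -/
theorem stmt18 (μ νt : ℝ → ℝ) (a : ℝ)
    (hμ0 : ∀ x, 0 ≤ μ x) (hν0 : ∀ x, 0 ≤ νt x)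
    (hμi : Integrable μ) (hνi : Integrable νt)
    (hμ1 : (∫ x, μ x) = 1) (hν1 : (∫ x, νt x) = 1)
    (s q : ℝ → ℝ)
    (hq : ∀ x, q x = ∫ t in Set.Iic x,
        (Θp (q t) * (νt (a - t) - μ t) + (1 - Θp (q t)) * max (νt (a - t) - μ t) 0))
    (hs : ∀ x, s x = ∫ t in Set.Iic x,
        (Θp (q t) * μ t + (1 - Θp (q t)) * min (μ t) (νt (a - t)))) :
    (∀ x, 0 ≤ q x) ∧ Monotone s ∧
    (∀ x, s x ≤ min (∫ t in Set.Iic x, μ t) ((∫ t in Set.Ici (a - x), νt t) + q x)) ∧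
    Filter.limsup s Filter.atTop ≤ 1 :=
  stmt18_general μ νt a hμ0 hν0 hμi hνi hμ1 s q hq hs
end
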